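/- arXiv:math/0609409 — 3 statements merged into one kernel-verified Lean document; each statement's English description precedes it below -/
import Mathlib

section
/- If N1 and N2 are R-invisible normal subgroups of a group G, then the product N1N2 is also an R-invisible normal subgroup of G. -/
open scoped TensorProduct

/-- The set of denominators of (reduced fractional expressions of) elements of `R ⊆ ℚ`. -/
def DR (R : Subring ℚ) : Set ℕ := {d | ∃ q ∈ R, q.den = d}

/-- A normal subgroup `N ≤ G` is `R`-invisible if it is normal, normally finitely generated and
every element of `N/[G,N]` has (finite) order lying in `D_R`, i.e. is annihilated by some
exponent in `D_R`. -/
def IsRInvisible (R : Subring ℚ) {G : Type*} [Group G] (N : Subgroup G) : Prop :=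
  N.Normal ∧
  (∃ s : Finset G, ↑s ⊆ (N : Set G) ∧ Subgroup.normalClosure ↑s = N) ∧
  ∀ x ∈ N, ∃ e ∈ DR R, x ^ e ∈ ⁅(⊤ : Subgroup G), N⁆

lemma inv_den_mem (R : Subring ℚ) {d : ℕ} (hd : d ∈ DR R) : ((d : ℚ))⁻¹ ∈ R := by
  obtain ⟨q, hq, rfl⟩ := hd
  have hg : q.num * Int.gcdA q.num q.den + q.den * Int.gcdB q.num q.den = 1 := by
    have := Int.gcd_eq_gcd_ab q.num q.den
    have hred : Int.gcd q.num (q.den : ℤ) = 1 := by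
      simpa [Int.gcd] using q.reduced
    omega
  have hden : ((q.den : ℚ)) ≠ 0 := by exact_mod_cast q.den_ne_zero
  have hnum : (q.den : ℚ) * q = q.num := by
    have h := q.num_div_den
    rw [div_eq_iff hden] at h
    rw [mul_comm]; exact h.symm
  have key : (q.den : ℚ) * ((Int.gcdA q.num q.den : ℚ) * q + (Int.gcdB q.num q.den : ℚ)) = 1 := by
    calc (q.den : ℚ) * ((Int.gcdA q.num q.den : ℚ) * q + (Int.gcdB q.num q.den : ℚ))
        = ((q.den : ℚ) * q) * (Int.gcdA q.num q.den : ℚ)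
          + (q.den : ℚ) * (Int.gcdB q.num q.den : ℚ) := by ring
      _ = ((q.num * Int.gcdA q.num q.den + q.den * Int.gcdB q.num q.den : ℤ) : ℚ) := by
          rw [hnum]; push_cast; ring
      _ = 1 := by rw [hg]; norm_num
  rw [inv_eq_of_mul_eq_one_right key]
  exact R.add_mem (R.mul_mem (intCast_mem R _) hq) (intCast_mem R _)

lemma DR_mul (R : Subring ℚ) {d₁ d₂ : ℕ} (h1 : d₁ ∈ DR R) (h2 : d₂ ∈ DR R) :
    d₁ * d₂ ∈ DR R := by
  have hd1 : 0 < d₁ := by obtain ⟨q, _, rfl⟩ := h1; exact q.pos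
  have hd2 : 0 < d₂ := by obtain ⟨q, _, rfl⟩ := h2; exact q.pos
  refine ⟨((d₁ * d₂ : ℕ) : ℚ)⁻¹, ?_, ?_⟩
  · push_cast
    rw [mul_inv]
    exact R.mul_mem (inv_den_mem R h1) (inv_den_mem R h2)
  · exact Rat.inv_natCast_den_of_pos (Nat.mul_pos hd1 hd2)

/-- The product of two `R`-invisible normal subgroups of `G` is an `R`-invisible normal
subgroup of `G`. (For normal subgroups `N₁ ⊔ N₂` is the product `N₁N₂`.) -/
theorem product_of_R_invisible_is_R_invisible (R : Subring ℚ) {G : Type*} [Group G]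
    (N₁ N₂ : Subgroup G) (h₁ : IsRInvisible R N₁) (h₂ : IsRInvisible R N₂) :
    IsRInvisible R (N₁ ⊔ N₂) := by
  obtain ⟨hn₁, ⟨s₁, hs₁, hc₁⟩, he₁⟩ := h₁
  obtain ⟨hn₂, ⟨s₂, hs₂, hc₂⟩, he₂⟩ := h₂
  haveI := hn₁; haveI := hn₂
  haveI hn : (N₁ ⊔ N₂).Normal := Subgroup.sup_normal N₁ N₂
  classical
  refine ⟨hn, ⟨s₁ ∪ s₂, ?_, ?_⟩, ?_⟩
  · rw [Finset.coe_union]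
    exact Set.union_subset (hs₁.trans (SetLike.coe_subset_coe.mpr le_sup_left))
      (hs₂.trans (SetLike.coe_subset_coe.mpr le_sup_right))
  · rw [Finset.coe_union]
    refine le_antisymm (Subgroup.normalClosure_le_normal ?_) (sup_le ?_ ?_)
    · exact Set.union_subset (hs₁.trans (SetLike.coe_subset_coe.mpr le_sup_left))
        (hs₂.trans (SetLike.coe_subset_coe.mpr le_sup_right))
    · exact hc₁ ▸ Subgroup.normalClosure_mono Set.subset_union_left
    · exact hc₂ ▸ Subgroup.normalClosure_mono Set.subset_union_right
  · intro x hx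
    rw [← SetLike.mem_coe, Subgroup.mul_normal N₁ N₂] at hx
    obtain ⟨a, ha, b, hb, rfl⟩ := hx
    obtain ⟨e₁, hd₁, hae⟩ := he₁ a ha
    obtain ⟨e₂, hd₂, hbe⟩ := he₂ b hb
    refine ⟨e₁ * e₂, DR_mul R hd₁ hd₂, ?_⟩
    set K := ⁅(⊤ : Subgroup G), N₁ ⊔ N₂⁆ with hK
    haveI : K.Normal := Subgroup.commutator_normal ⊤ (N₁ ⊔ N₂)
    have hleK : ∀ (N : Subgroup G), N ≤ N₁ ⊔ N₂ → ⁅(⊤ : Subgroup G), N⁆ ≤ K :=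
      fun N h => Subgroup.commutator_mono le_rfl h
    set φ := QuotientGroup.mk' K with hφ
    have hone : ∀ g : G, g ∈ K → φ g = 1 := fun g hg =>
      (QuotientGroup.eq_one_iff g).mpr hg
    have hcomm : Commute (φ a) (φ b) := by
      rw [← commutatorElement_eq_one_iff_commute, ← map_commutatorElement]
      exact hone _ (Subgroup.commutator_mem_commutator (Subgroup.mem_top a)
        (Subgroup.mem_sup_right hb))
    have h1 : (φ a) ^ (e₁ * e₂) = 1 := by
      rw [pow_mul, ← map_pow, hone _ (hleK N₁ le_sup_left hae), one_pow]
    have h2 : (φ b) ^ (e₁ * e₂) = 1 := by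
      rw [pow_mul', ← map_pow, hone _ (hleK N₂ le_sup_right hbe), one_pow]
    have : φ ((a * b) ^ (e₁ * e₂)) = 1 := by
      rw [map_pow, map_mul, hcomm.mul_pow, h1, h2, one_mul]
    exact (QuotientGroup.eq_one_iff _).mp this
end

section
/- For every group G there exists an R-closure, i.e., a homomorphism G → Ĝ into an R-closed group Ĝ that is initial among homomorphisms of G into R-closed groups: for any homomorphism φ of G into an R-closed group A there is a unique homomorphism Ĝ → A through which φ factors. -/
open scoped TensorProduct

variable {G H A : Type*} [Group G] [Group H] [Group A]

/-- Evaluation of a monomial over `G` in `n` indeterminates at a tuple of elements of `G`. -/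
noncomputable def evalWord {n : ℕ} (g : Fin n → G) :
    Monoid.Coprod G (FreeGroup (Fin n)) →* G :=
  Monoid.Coprod.lift (MonoidHom.id G) (FreeGroup.lift g)

/-- The projection `G * F → F → F/[F,F]`. -/
noncomputable def toFreeAb (G : Type*) [Group G] (n : ℕ) :
    Monoid.Coprod G (FreeGroup (Fin n)) →* Abelianization (FreeGroup (Fin n)) :=
  Monoid.Coprod.lift 1 Abelianization.of

/-- An `R`-nullhomologous system of equations `xᵢ^e = wᵢ(x₁,…,xₙ)` over `G`. -/
structure NullSys (R : Subring ℚ) (G : Type*) [Group G] where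
  n : ℕ
  e : ℕ
  he : e ∈ DR R
  w : Fin n → Monoid.Coprod G (FreeGroup (Fin n))
  nullh : ∀ i, toFreeAb G n (w i) = 1

/-- A solution of a system of equations over `G`. -/
def NullSys.IsSolution {R : Subring ℚ} (S : NullSys R G) (g : Fin S.n → G) : Prop :=
  ∀ i, (g i) ^ S.e = evalWord g (S.w i)

/-- A group is `R`-closed if every `R`-nullhomologous system over it has a unique solution. -/
def IsRClosed (R : Subring ℚ) (A : Type*) [Group A] : Prop :=
  ∀ S : NullSys R A, ∃! g : Fin S.n → A, S.IsSolution g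

/-!
Over a subgroup `B` of an `R`-closed group `A`, adjoin to `B` the solutions in `A` of all
`R`-nullhomologous systems with coefficients in `B`, and repeat `ω` times. The union is the
smallest subgroup containing `B` that contains the solutions of its own systems, so it is
`R`-closed; and by uniqueness of solutions it has at most `max #B ℵ₀` elements. Hence every
homomorphism `G → A` factors through an `R`-closed group carried by a subset of `G ⊕ ℕ`, and these
form a set. The `R`-closure of `G` is the subgroup obtained in this way from the image of `G` in the
product of all of them. A factorization through it is unique because two homomorphisms into an
`R`-closed group agree on the solutions of any system on whose coefficients they agree, so their
equalizer is again closed under solutions and contains the image of `G`.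
-/

universe u

namespace NullSys

variable {R : Subring ℚ}

theorem toFreeAb_comp_map (n : ℕ) (f : H →* A) :
    (toFreeAb A n).comp (Monoid.Coprod.map f (MonoidHom.id _)) = toFreeAb H n :=
  Monoid.Coprod.hom_ext rfl rfl

theorem evalWord_map {n : ℕ} (f : H →* A) (g : Fin n → H)
    (x : Monoid.Coprod H (FreeGroup (Fin n))) :
    evalWord (f ∘ g) (Monoid.Coprod.map f (MonoidHom.id _) x) = f (evalWord g x) := by
  have : (evalWord (f ∘ g)).comp (Monoid.Coprod.map f (MonoidHom.id _)) = f.comp (evalWord g) :=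
    Monoid.Coprod.hom_ext rfl (by ext; simp [evalWord])
  exact DFunLike.congr_fun this x

def map (f : H →* A) (S : NullSys R H) : NullSys R A where
  n := S.n
  e := S.e
  he := S.he
  w i := Monoid.Coprod.map f (MonoidHom.id _) (S.w i)
  nullh i := by rw [← S.nullh i, ← toFreeAb_comp_map S.n f, MonoidHom.comp_apply]

theorem isSolution_map_map_iff (f : H →* A) (j : G →* H) (S : NullSys R G) (g : Fin S.n → A) :
    ((S.map j).map f).IsSolution g ↔ (S.map (f.comp j)).IsSolution g := by
  simp only [IsSolution, map, Monoid.Coprod.map_map, MonoidHom.id_comp]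
  rfl

theorem isSolution_map_comp_iff (f : H →* A) (S : NullSys R H) (g : Fin S.n → H) :
    (S.map f).IsSolution (f ∘ g) ↔ ∀ i, f (g i ^ S.e) = f (evalWord g (S.w i)) := by
  refine forall_congr' fun i => ?_
  show f (g i) ^ S.e = evalWord (f ∘ g) (Monoid.Coprod.map f (MonoidHom.id _) (S.w i)) ↔ _
  rw [evalWord_map, map_pow]

theorem IsSolution.map {S : NullSys R H} {g : Fin S.n → H} (hg : S.IsSolution g) (f : H →* A) :
    (S.map f).IsSolution (f ∘ g) :=
  (isSolution_map_comp_iff f S g).2 fun i => congrArg f (hg i)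

theorem isSolution_map_comp_iff_of_injective {f : H →* A} (hf : Function.Injective f)
    (S : NullSys R H) (g : Fin S.n → H) : (S.map f).IsSolution (f ∘ g) ↔ S.IsSolution g :=
  (isSolution_map_comp_iff f S g).trans (forall_congr' fun _ => hf.eq_iff)

theorem isSolution_pi_iff {ι : Type*} {F : ι → Type*} [∀ i, Group (F i)]
    (S : NullSys R (∀ i, F i)) (g : Fin S.n → ∀ i, F i) :
    S.IsSolution g ↔ ∀ i, (S.map (Pi.evalMonoidHom F i)).IsSolution fun j => g j i := by
  calc S.IsSolution g
      ↔ ∀ j i, Pi.evalMonoidHom F i (g j ^ S.e) = Pi.evalMonoidHom F i (evalWord g (S.w j)) :=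
        forall_congr' fun _ => funext_iff
    _ ↔ ∀ i j, Pi.evalMonoidHom F i (g j ^ S.e) = Pi.evalMonoidHom F i (evalWord g (S.w j)) :=
        forall_comm
    _ ↔ _ := forall_congr' fun i => (isSolution_map_comp_iff _ S g).symm

theorem exists_map_eq (f : H →* A) (S : NullSys R A)
    (hS : ∀ i, S.w i ∈ (Monoid.Coprod.map f (MonoidHom.id _)).range) :
    ∃ S' : NullSys R H, S'.map f = S := by
  obtain ⟨n, e, he, w, hw⟩ := S
  choose w' hw' using hS
  have hnull : ∀ i, toFreeAb H n (w' i) = 1 := fun i => by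
    rw [← toFreeAb_comp_map n f, MonoidHom.comp_apply, hw', hw]
  refine ⟨⟨n, e, he, w', hnull⟩, ?_⟩
  simp only [map, mk.injEq, heq_eq_eq, true_and]
  exact funext hw'

end NullSys

namespace IsRClosed

open NullSys

variable {R : Subring ℚ}

theorem of_injective (hA : IsRClosed R A) {f : H →* A} (hf : Function.Injective f)
    (hrange : ∀ (S : NullSys R H) (g : Fin S.n → A),
      (S.map f).IsSolution g → ∀ i, g i ∈ f.range) :
    IsRClosed R H := by
  intro S
  obtain ⟨g, hg, huniq⟩ := hA (S.map f)
  choose g' hg' using hrange S g hg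
  have hfg' : f ∘ g' = g := funext hg'
  refine ⟨g', (isSolution_map_comp_iff_of_injective hf S g').1 (hfg' ▸ hg), fun y hy => ?_⟩
  have hfy : f ∘ y = g := huniq _ (hy.map f)
  exact funext fun i => hf (congrFun (hfy.trans hfg'.symm) i)

theorem of_mulEquiv (hA : IsRClosed R A) (e : H ≃* A) : IsRClosed R H :=
  hA.of_injective (f := e.toMonoidHom) e.injective fun _ g _ i =>
    ⟨e.symm (g i), e.apply_symm_apply _⟩

theorem pi {ι : Type*} {F : ι → Type*} [∀ i, Group (F i)] (hF : ∀ i, IsRClosed R (F i)) :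
    IsRClosed R (∀ i, F i) := by
  intro S
  choose g hg huniq using fun i => hF i (S.map (Pi.evalMonoidHom F i))
  refine ⟨fun j i => g i j, (isSolution_pi_iff S _).2 hg, fun y hy => ?_⟩
  exact funext fun j => funext fun i => congrFun (huniq i _ ((isSolution_pi_iff S y).1 hy i)) j

theorem eq_of_isSolution (hA : IsRClosed R A) {ψ₁ ψ₂ : H →* A} {j : G →* H}
    (hj : ψ₁.comp j = ψ₂.comp j) {S : NullSys R G} {g : Fin S.n → H}
    (hg : (S.map j).IsSolution g) : ψ₁ ∘ g = ψ₂ ∘ g := by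
  have h₁ := (isSolution_map_map_iff ψ₁ j S _).1 (hg.map ψ₁)
  have h₂ := (isSolution_map_map_iff ψ₂ j S _).1 (hg.map ψ₂)
  rw [hj] at h₁
  exact (hA _).unique h₁ h₂

end IsRClosed

open Filter in
theorem eventually_mem_range_map_inclusion {K : ℕ → Subgroup A} (hK : Monotone K) {M : Type*}
    [Group M] (x : Monoid.Coprod (⨆ k, K k : Subgroup A) M) :
    ∀ᶠ k in atTop,
      x ∈ (Monoid.Coprod.map (Subgroup.inclusion (le_iSup K k)) (MonoidHom.id M)).range := by
  induction x using Monoid.Coprod.induction_on with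
  | inl b =>
    obtain ⟨k₀, hb⟩ := (Subgroup.mem_iSup_of_directed hK.directed_le).1 b.2
    exact eventually_atTop.2 ⟨k₀, fun k hk => ⟨Monoid.Coprod.inl ⟨b, hK hk hb⟩, rfl⟩⟩
  | inr m => exact Eventually.of_forall fun k => ⟨Monoid.Coprod.inr m, rfl⟩
  | mul x y hx hy => exact (hx.and hy).mono fun k h => mul_mem h.1 h.2

section SolutionClosure

open NullSys Filter

variable {R : Subring ℚ}

def solutionSet (R : Subring ℚ) (B : Subgroup A) : Set A :=
  {a | ∃ (S : NullSys R B) (g : Fin S.n → A), (S.map B.subtype).IsSolution g ∧ a ∈ Set.range g}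

def IsSolutionClosed (R : Subring ℚ) (B : Subgroup A) : Prop :=
  solutionSet R B ⊆ B

def solutionStep (R : Subring ℚ) (B : Subgroup A) : Subgroup A :=
  Subgroup.closure (B ∪ solutionSet R B)

def solutionClosure (R : Subring ℚ) (B : Subgroup A) : Subgroup A :=
  ⨆ k, (solutionStep R)^[k] B

theorem isSolution_map_inclusion_map_subtype_iff {B K : Subgroup A} (hBK : B ≤ K)
    (S : NullSys R B) (g : Fin S.n → A) :
    ((S.map (Subgroup.inclusion hBK)).map K.subtype).IsSolution g ↔
      (S.map B.subtype).IsSolution g := by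
  rw [isSolution_map_map_iff, Subgroup.subtype_comp_inclusion]

theorem solutionSet_mono {B K : Subgroup A} (hBK : B ≤ K) :
    solutionSet R B ⊆ solutionSet R K := by
  rintro _ ⟨S, g, hg, hi⟩
  exact ⟨S.map (Subgroup.inclusion hBK), g,
    (isSolution_map_inclusion_map_subtype_iff hBK S g).2 hg, hi⟩

theorem IsSolutionClosed.exists_isSolution {L : Subgroup A} (hL : IsSolutionClosed R L)
    {S : NullSys R H} {f : H →* L} {g : Fin S.n → A}
    (hg : (S.map (L.subtype.comp f)).IsSolution g) :
    ∃ g' : Fin S.n → L, L.subtype ∘ g' = g ∧ (S.map f).IsSolution g' := by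
  have hgL : ∀ i, g i ∈ L := fun i =>
    hL ⟨S.map f, g, (isSolution_map_map_iff _ _ _ _).2 hg, i, rfl⟩
  refine ⟨fun i => ⟨g i, hgL i⟩, rfl, ?_⟩
  exact (isSolution_map_comp_iff_of_injective L.subtype_injective _ _).1
    ((isSolution_map_map_iff _ _ _ _).2 hg)

theorem IsSolutionClosed.isRClosed (hA : IsRClosed R A) {B : Subgroup A}
    (hB : IsSolutionClosed R B) : IsRClosed R B :=
  hA.of_injective B.subtype_injective fun S g hg i => by
    rw [Subgroup.range_subtype]
    exact hB ⟨S, g, hg, i, rfl⟩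

theorem le_solutionStep (B : Subgroup A) : B ≤ solutionStep R B :=
  fun _ hb => Subgroup.subset_closure (Or.inl hb)

theorem solutionSet_subset_solutionStep (B : Subgroup A) :
    solutionSet R B ⊆ solutionStep R B :=
  fun _ ha => Subgroup.subset_closure (Or.inr ha)

theorem monotone_iterate_solutionStep (B : Subgroup A) :
    Monotone fun k => (solutionStep R)^[k] B :=
  monotone_nat_of_le_succ fun k => by
    rw [Function.iterate_succ_apply']
    exact le_solutionStep _

theorem le_solutionClosure (B : Subgroup A) : B ≤ solutionClosure R B :=
  le_iSup (fun k => (solutionStep R)^[k] B) 0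

theorem solutionClosure_le {B K : Subgroup A} (hK : IsSolutionClosed R K) (hBK : B ≤ K) :
    solutionClosure R B ≤ K := by
  refine iSup_le fun k => ?_
  induction k with
  | zero => exact hBK
  | succ k ih =>
    rw [Function.iterate_succ_apply', solutionStep, Subgroup.closure_le]
    exact Set.union_subset ih ((solutionSet_mono ih).trans hK)

theorem isSolutionClosed_solutionClosure (B : Subgroup A) :
    IsSolutionClosed R (solutionClosure R B) := by
  unfold solutionClosure
  rintro _ ⟨S, g, hg, i, rfl⟩
  -- `S` has finitely many coefficients, so it is defined over a single stage of the union.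
  obtain ⟨k, hk⟩ := (eventually_all.2 fun i =>
    eventually_mem_range_map_inclusion (monotone_iterate_solutionStep (R := R) B) (S.w i)).exists
  obtain ⟨S', rfl⟩ := S.exists_map_eq _ hk
  replace hg := (isSolution_map_inclusion_map_subtype_iff _ S' g).1 hg
  refine le_iSup (fun k => (solutionStep R)^[k] B) (k + 1) ?_
  rw [Function.iterate_succ_apply']
  exact solutionSet_subset_solutionStep _ ⟨S', g, hg, i, rfl⟩

theorem solutionClosure_hom_ext (hA : IsRClosed R A) {P : Type*} [Group P] {B : Subgroup P}
    {ψ₁ ψ₂ : solutionClosure R B →* A}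
    (h : ψ₁.comp (Subgroup.inclusion (le_solutionClosure B)) =
      ψ₂.comp (Subgroup.inclusion (le_solutionClosure B))) : ψ₁ = ψ₂ := by
  let E := (ψ₁.eqLocus ψ₂).map (solutionClosure R B).subtype
  have hEC : E ≤ solutionClosure R B := Subgroup.map_subtype_le _
  have hBE : B ≤ E := fun b hb =>
    ⟨⟨b, le_solutionClosure B hb⟩, by exact DFunLike.congr_fun h ⟨b, hb⟩, rfl⟩
  have hE : IsSolutionClosed R E := by
    rintro _ ⟨S, g, hg, i, rfl⟩
    rw [← Subgroup.subtype_comp_inclusion hEC] at hg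
    obtain ⟨g', rfl, hg'⟩ := (isSolutionClosed_solutionClosure B).exists_isSolution hg
    have hψ : ψ₁.comp (Subgroup.inclusion hEC) = ψ₂.comp (Subgroup.inclusion hEC) := by
      ext ⟨_, x, hx, rfl⟩
      exact hx
    exact ⟨g' i, congrFun (hA.eq_of_isSolution hψ hg') i, rfl⟩
  ext x
  obtain ⟨y, hy, hyx⟩ := solutionClosure_le hE hBE x.2
  rwa [← Subtype.ext hyx]

end SolutionClosure

section Cardinality

open Cardinal

variable {R : Subring ℚ} {κ : Cardinal.{u}}

theorem mk_list_le_of_mk_le (hκ : ℵ₀ ≤ κ) {X : Type u} (hX : #X ≤ κ) : #(List X) ≤ κ :=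
  (mk_list_le_max X).trans (max_le hκ hX)

theorem mk_sigma_le_of_mk_le (hκ : ℵ₀ ≤ κ) {ι : Type u} {X : ι → Type u} (hι : #ι ≤ κ)
    (hX : ∀ i, #(X i) ≤ κ) : #(Σ i, X i) ≤ κ := by
  rw [mk_sigma]
  exact (sum_le_mk_mul_iSup _).trans (mul_le_of_le hκ hι (ciSup_le' hX))

theorem mk_coprod_le (hκ : ℵ₀ ≤ κ) {B : Type u} [Group B] {M : Type} [Group M] [Countable M]
    (hB : #B ≤ κ) : #(Monoid.Coprod B M) ≤ κ := by
  refine (mk_le_of_surjective Monoid.Coprod.mk_surjective).trans (mk_list_le_of_mk_le hκ ?_)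
  rw [mk_sum, lift_uzero]
  exact add_le_of_le hκ hB (lift_le_aleph0.2 mk_le_aleph0 |>.trans hκ)

theorem mk_closure_le (hκ : ℵ₀ ≤ κ) {A : Type u} [Group A] {s : Set A} (hs : #s ≤ κ) :
    #(Subgroup.closure s) ≤ κ := by
  classical
  have hrange : (FreeGroup.lift ((↑) : s → A)).range = Subgroup.closure s := by
    rw [FreeGroup.range_lift_eq_closure, Subtype.range_coe]
  rw [← hrange]
  refine (mk_le_of_surjective (MonoidHom.rangeRestrict_surjective _)).trans <|
    (mk_le_of_injective FreeGroup.toWord_injective).trans (mk_list_le_of_mk_le hκ ?_)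
  rw [mk_prod, lift_uzero, mk_fintype Bool, Fintype.card_bool, Nat.cast_ofNat, lift_ofNat]
  exact mul_le_of_le hκ hs ((natCast_lt_aleph0 (n := 2)).le.trans hκ)

theorem mk_nullSys_le (hκ : ℵ₀ ≤ κ) {B : Type u} [Group B] (hB : #B ≤ κ) :
    #(NullSys R B) ≤ κ := by
  let code : NullSys R B →
      Σ p : ULift.{u} (ℕ × ℕ), Fin p.down.1 → Monoid.Coprod B (FreeGroup (Fin p.down.1)) :=
    fun S => ⟨⟨S.n, S.e⟩, S.w⟩
  have hcode : Function.Injective code := by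
    rintro ⟨n, e, he, w, hw⟩ ⟨n', e', he', w', hw'⟩ h
    simp only [code, Sigma.mk.injEq, ULift.up.injEq, Prod.mk.injEq] at h
    obtain ⟨⟨rfl, rfl⟩, h⟩ := h
    cases eq_of_heq h
    rfl
  refine (mk_le_of_injective hcode).trans (mk_sigma_le_of_mk_le hκ ?_ fun p => ?_)
  · exact (mk_le_aleph0 (α := ULift.{u} (ℕ × ℕ))).trans hκ
  · exact (mk_le_of_injective List.ofFn_injective).trans
      (mk_list_le_of_mk_le hκ (mk_coprod_le hκ hB))

theorem mk_solutionSet_le {A : Type u} [Group A] (hκ : ℵ₀ ≤ κ) (hA : IsRClosed R A)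
    {B : Subgroup A} (hB : #B ≤ κ) :
    #(solutionSet R B) ≤ κ := by
  let solution (p : Σ S : NullSys R B, ULift.{u} (Fin S.n)) : A :=
    (hA (p.1.map B.subtype)).exists.choose p.2.down
  have hsub : solutionSet R B ⊆ Set.range solution := by
    rintro _ ⟨S, g, hg, i, rfl⟩
    exact ⟨⟨S, ⟨i⟩⟩, congrFun ((hA _).unique (hA _).exists.choose_spec hg) i⟩
  refine (mk_le_mk_of_subset hsub).trans <| mk_range_le.trans <|
    mk_sigma_le_of_mk_le hκ (mk_nullSys_le hκ hB) fun S => ?_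
  exact mk_le_aleph0.trans hκ

theorem mk_solutionStep_le {A : Type u} [Group A] (hκ : ℵ₀ ≤ κ) (hA : IsRClosed R A)
    {B : Subgroup A} (hB : #B ≤ κ) :
    #(solutionStep R B) ≤ κ :=
  mk_closure_le hκ <| (mk_union_le _ _).trans <| add_le_of_le hκ hB (mk_solutionSet_le hκ hA hB)

theorem mk_solutionClosure_le {A : Type u} [Group A] (hκ : ℵ₀ ≤ κ) (hA : IsRClosed R A)
    {B : Subgroup A} (hB : #B ≤ κ) :
    #(solutionClosure R B) ≤ κ := by
  have hstage : ∀ k, #((solutionStep R)^[k] B) ≤ κ := fun k => by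
    induction k with
    | zero => exact hB
    | succ k ih =>
      rw [Function.iterate_succ_apply']
      exact mk_solutionStep_le hκ hA ih
  have hunion : (solutionClosure R B : Set A) = ⋃ k, ((solutionStep R)^[k] B : Set A) :=
    Subgroup.coe_iSup_of_directed (monotone_iterate_solutionStep B).directed_le
  change #(solutionClosure R B : Set A) ≤ κ
  rw [hunion]
  have hle := mk_iUnion_le_lift fun k => ((solutionStep R)^[k] B : Set A)
  rw [lift_uzero, mk_nat, lift_aleph0] at hle
  exact hle.trans (mul_le_of_le hκ hκ (ciSup_le' fun k => (lift_uzero _).trans_le (hstage k)))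

end Cardinality

section SmallModels

open Cardinal

variable {R : Subring ℚ}

theorem exists_set_mulEquiv_of_mk_le {H T : Type u} [Group H] (h : #H ≤ #T) :
    ∃ (s : Set T) (_ : Group s), Nonempty (s ≃* H) := by
  obtain ⟨ι⟩ := h
  let e : H ≃ Set.range ι := Equiv.ofInjective ι ι.injective
  let _ := e.symm.group
  exact ⟨Set.range ι, _, ⟨e.symm.mulEquiv⟩⟩

structure SmallRClosedHom (R : Subring ℚ) (G T : Type u) [Group G] : Type u where
  carrier : Set T
  [group : Group carrier]
  toHom : G →* carrier
  isRClosed : IsRClosed R carrier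

attribute [instance] SmallRClosedHom.group

theorem SmallRClosedHom.exists_comp_eq {G A : Type u} [Group G] [Group A] (hA : IsRClosed R A)
    (φ : G →* A) :
    ∃ (i : SmallRClosedHom R G (G ⊕ ULift.{u} ℕ)) (ψ : i.carrier →* A), ψ.comp i.toHom = φ := by
  let A' := solutionClosure R φ.range
  have hA' : IsRClosed R A' := (isSolutionClosed_solutionClosure _).isRClosed hA
  have hcard : #A' ≤ #(G ⊕ ULift.{u} ℕ) :=
    mk_solutionClosure_le (aleph0_le_mk _) hA <|
      (mk_le_of_surjective φ.rangeRestrict_surjective).trans (mk_le_of_injective Sum.inl_injective)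
  obtain ⟨s, _, ⟨e⟩⟩ := exists_set_mulEquiv_of_mk_le hcard
  refine ⟨⟨s, e.symm.toMonoidHom.comp (φ.codRestrict A' fun g => le_solutionClosure _ ⟨g, rfl⟩),
    hA'.of_mulEquiv e⟩, A'.subtype.comp e.toMonoidHom, ?_⟩
  ext g
  simp

end SmallModels

/-- Every group `G` admits an `R`-closure: a homomorphism `G → Ĝ` into an `R`-closed group which
is initial among homomorphisms of `G` into `R`-closed groups. -/
theorem exists_rClosure (R : Subring ℚ) (G : Type u) [Group G] :
    ∃ (Ghat : Type u) (_ : Group Ghat) (c : G →* Ghat), IsRClosed R Ghat ∧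
      ∀ (A : Type u) (_ : Group A), IsRClosed R A →
        ∀ φ : G →* A, ∃! ψ : Ghat →* A, ψ.comp c = φ := by
  let P := ∀ i : SmallRClosedHom R G (G ⊕ ULift.{u} ℕ), i.carrier
  let c : G →* P := MonoidHom.pi fun i => i.toHom
  let Ghat := solutionClosure R c.range
  refine ⟨Ghat, inferInstance, (Subgroup.inclusion (le_solutionClosure _)).comp c.rangeRestrict,
    (isSolutionClosed_solutionClosure _).isRClosed (IsRClosed.pi fun i => i.isRClosed),
    fun A _ hA φ => ?_⟩
  obtain ⟨i, ψ, rfl⟩ := SmallRClosedHom.exists_comp_eq hA φ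
  refine ⟨ψ.comp ((Pi.evalMonoidHom _ i).comp Ghat.subtype), rfl, fun ψ' hψ' => ?_⟩
  refine solutionClosure_hom_ext hA ?_
  rwa [← MonoidHom.cancel_right c.rangeRestrict_surjective]
end

section
/- Let F be a free group of rank μ > 1 with generators x, y, and let F̂ be its Q-closure. Consider u ∈ H_1(F̂; Z[H_1(F̂;Q)]) = F̂^(1)/[F̂^(1), F̂^(1)] represented by xyx^{-1}y^{-1}, and s = [x] - 1 ∈ Z[H_1(F̂;Q)]. Then there is no v ∈ H_1(F̂; Z[H_1(F̂;Q)]) with s·v = u. Consequently, the canonical map H_1(F̂; Z[H_1(F̂;Q)]) → H_1(F̂; K(H_1(F̂;Q))) into the Ore localization is not surjective. -/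
open scoped TensorProduct
open scoped commutatorElement

variable {G H A : Type*} [Group G] [Group H] [Group A]

universe u

/-- An `R`-closure of `G`: a homomorphism into an `R`-closed group, initial among homomorphisms
of `G` into `R`-closed groups. -/
def IsRClosure (R : Subring ℚ) {G Ghat : Type u} [Group G] [Group Ghat] (c : G →* Ghat) : Prop :=
  IsRClosed R Ghat ∧
    ∀ (A : Type u) (_ : Group A), IsRClosed R A →
      ∀ φ : G →* A, ∃! ψ : Ghat →* A, ψ.comp c = φ

/-- The conjugation action of `g : A` on the abelianization of a normal subgroup `C ≤ A`. -/
noncomputable def conjAbel {A : Type*} [Group A] (C : Subgroup A) [C.Normal] (g : A) :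
    Abelianization ↥C →* Abelianization ↥C :=
  Abelianization.map (MulAut.conjNormal g).toMonoidHom

/-- The action of an element `p` of the group ring `ℤ[A/C]` on the abelianization of a normal
subgroup `C ≤ A` (written multiplicatively), induced by conjugation. -/
noncomputable def pAct {A : Type*} [Group A] (C : Subgroup A) [C.Normal]
    (p : (A ⧸ C) →₀ ℤ) (m : Abelianization ↥C) : Abelianization ↥C :=
  p.prod fun q c => (conjAbel C q.out m) ^ c

/-!
Send the free generators `x, y` to `(1, 0, 0)` and `(0, 1, 0)` in the rational Heisenberg group
`H`. It is `ℚ`-closed: a null-homologous system is first solved modulo the centre, where each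
word takes a constant value and roots are unique, and then exactly, because the value of a
null-homologous word depends on its arguments only modulo the centre. So the map extends to
`ψ : F̂ → H`, and `ψ` sends `F̂⁽¹⁾` into the centre `ℚ` of `H`. This gives a conjugation-invariant
character `χ` of `F̂⁽¹⁾/[F̂⁽¹⁾,F̂⁽¹⁾]`, so `χ (p • v) = ε(p) χ(v)` with `ε` the augmentation. But
`ε([x] - 1) = 0`, whereas `χ(u) = 1` is the central coordinate of `[(1,0,0), (0,1,0)]`. Finally
`[x] - 1 ≠ 0` because `ψ x` is not central.
-/

theorem ne_zero_of_mem_DR {R : Subring ℚ} {e : ℕ} (he : e ∈ DR R) : e ≠ 0 := by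
  obtain ⟨q, -, rfl⟩ := he
  exact q.den_nz

section evalWord

variable {n : ℕ}

theorem map_evalWord_of_toFreeAb_eq_one {M : Type*} [CommGroup M] (π : G →* M)
    (g : Fin n → G) {w : Monoid.Coprod G (FreeGroup (Fin n))} (hw : toFreeAb G n w = 1) :
    π (evalWord g w) = Monoid.Coprod.lift π 1 w := by
  have key : π.comp (evalWord g) = Monoid.Coprod.lift π 1 *
      (Abelianization.lift (FreeGroup.lift (π ∘ g))).comp (toFreeAb G n) := by
    ext <;> simp [evalWord, toFreeAb]
  simpa [hw] using DFunLike.congr_fun key w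

open scoped IsMulCommutative in
theorem evalWord_eq_of_inv_mul_mem_center {g g' : Fin n → G}
    (hg : ∀ i, (g i)⁻¹ * g' i ∈ Subgroup.center G)
    {w : Monoid.Coprod G (FreeGroup (Fin n))} (hw : toFreeAb G n w = 1) :
    evalWord g' w = evalWord g w := by
  let z : Monoid.Coprod G (FreeGroup (Fin n)) →* Subgroup.center G :=
    (Abelianization.lift (FreeGroup.lift fun i => ⟨_, hg i⟩)).comp (toFreeAb G n)
  let f : Monoid.Coprod G (FreeGroup (Fin n)) →* G :=
    { toFun := fun w => evalWord g w * z w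
      map_one' := by simp
      map_mul' := fun u v => by
        simp only [map_mul, Subgroup.coe_mul]
        rw [mul_assoc (evalWord g u) (z u : G), ← mul_assoc (z u : G),
          ← Subgroup.mem_center_iff.mp (z u).2 (evalWord g v)]
        simp only [mul_assoc] }
  have key : evalWord g' = f := by ext <;> simp [f, z, evalWord, toFreeAb]
  simpa [hw, f, z] using DFunLike.congr_fun key w

theorem isRClosed_of_ker_le_center {R : Subring ℚ} {M : Type*} [CommGroup M] (π : G →* M)
    (hπ : π.ker ≤ Subgroup.center G)
    (hG : ∀ e ∈ DR R, Function.Bijective fun g : G => g ^ e)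
    (hM : ∀ e ∈ DR R, Function.Injective fun m : M => m ^ e) : IsRClosed R G := by
  intro S
  have hπ_eval (g : Fin S.n → G) (i : Fin S.n) :
      π (evalWord g (S.w i)) = Monoid.Coprod.lift π 1 (S.w i) :=
    map_evalWord_of_toFreeAb_eq_one π g (S.nullh i)
  have heval_eq (g g' : Fin S.n → G) (h : ∀ j, π (g j ^ S.e) = π (g' j ^ S.e))
      (i : Fin S.n) : evalWord g' (S.w i) = evalWord g (S.w i) := by
    refine evalWord_eq_of_inv_mul_mem_center (fun j => hπ ?_) (S.nullh i)
    rw [MonoidHom.mem_ker, map_mul, map_inv, inv_mul_eq_one]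
    exact hM S.e S.he (by simpa only [map_pow] using h j)
  obtain ⟨root, hroot⟩ := (hG S.e S.he).surjective.hasRightInverse
  replace hroot : ∀ x, root x ^ S.e = x := hroot
  -- `g₀` solves the system modulo the centre, which suffices for `g₁` to solve it exactly
  let g₀ (i : Fin S.n) : G := root (evalWord 1 (S.w i))
  let g₁ (i : Fin S.n) : G := root (evalWord g₀ (S.w i))
  have hg₁ : S.IsSolution g₁ := fun i => by
    rw [hroot, heval_eq g₀ g₁ (fun j => by simp only [g₀, g₁, hroot, hπ_eval])]
  refine ⟨g₁, hg₁, fun g hg => funext fun i => (hG S.e S.he).injective ?_⟩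
  simp only [hg i, hg₁ i]
  exact heval_eq g₁ g (fun j => by rw [hg j, hg₁ j, hπ_eval, hπ_eval]) i

end evalWord

@[ext]
structure Heisenberg (R : Type*) where
  a : R
  b : R
  c : R

namespace Heisenberg

section CommRing

variable {R : Type*} [CommRing R]

-- `⟨a, b, c⟩` is the unitriangular matrix `[[1, a, c], [0, 1, b], [0, 0, 1]]`
instance : Mul (Heisenberg R) := ⟨fun p q => ⟨p.a + q.a, p.b + q.b, p.c + q.c + p.a * q.b⟩⟩
instance : One (Heisenberg R) := ⟨⟨0, 0, 0⟩⟩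
instance : Inv (Heisenberg R) := ⟨fun p => ⟨-p.a, -p.b, p.a * p.b - p.c⟩⟩

@[simp] theorem mul_a (p q : Heisenberg R) : (p * q).a = p.a + q.a := rfl
@[simp] theorem mul_b (p q : Heisenberg R) : (p * q).b = p.b + q.b := rfl
@[simp] theorem mul_c (p q : Heisenberg R) : (p * q).c = p.c + q.c + p.a * q.b := rfl
@[simp] theorem one_a : (1 : Heisenberg R).a = 0 := rfl
@[simp] theorem one_b : (1 : Heisenberg R).b = 0 := rfl
@[simp] theorem one_c : (1 : Heisenberg R).c = 0 := rfl
@[simp] theorem inv_a (p : Heisenberg R) : p⁻¹.a = -p.a := rfl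
@[simp] theorem inv_b (p : Heisenberg R) : p⁻¹.b = -p.b := rfl
@[simp] theorem inv_c (p : Heisenberg R) : p⁻¹.c = p.a * p.b - p.c := rfl

instance : Group (Heisenberg R) where
  mul_assoc p q r := by ext <;> simp <;> ring
  one_mul p := by ext <;> simp
  mul_one p := by ext <;> simp
  inv_mul_cancel p := by ext <;> simp

theorem pow_eq (p : Heisenberg R) (n : ℕ) :
    p ^ n = ⟨n * p.a, n * p.b, n * p.c + n.choose 2 * p.a * p.b⟩ := by
  induction n with
  | zero => ext <;> simp
  | succ n ih => rw [pow_succ, ih]; ext <;> simp [Nat.choose_succ_succ] <;> ring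

def proj : Heisenberg R →* Multiplicative (R × R) where
  toFun p := Multiplicative.ofAdd (p.a, p.b)
  map_one' := rfl
  map_mul' _ _ := rfl

theorem mem_ker_proj {p : Heisenberg R} :
    p ∈ (proj : Heisenberg R →* _).ker ↔ p.a = 0 ∧ p.b = 0 := by
  simp [proj, MonoidHom.mem_ker, Prod.ext_iff]

theorem ker_proj_le_center :
    (proj : Heisenberg R →* _).ker ≤ Subgroup.center (Heisenberg R) := by
  intro z hz
  obtain ⟨ha, hb⟩ := mem_ker_proj.mp hz
  refine Subgroup.mem_center_iff.mpr fun q => ?_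
  ext <;> simp [ha, hb, add_comm]

def centralCoord : (proj : Heisenberg R →* _).ker →* Multiplicative R where
  toFun z := Multiplicative.ofAdd z.1.c
  map_one' := rfl
  map_mul' z z' := by simp [(mem_ker_proj.mp z.2).1]

theorem map_mem_ker_proj_of_mem_commutator (ψ : A →* Heisenberg R) {m : A}
    (hm : m ∈ ⁅(⊤ : Subgroup A), (⊤ : Subgroup A)⁆) : ψ m ∈ (proj : Heisenberg R →* _).ker :=
  Abelianization.commutator_subset_ker (proj.comp ψ) hm

def commutatorCoord (ψ : A →* Heisenberg R) :
    ↥(⁅(⊤ : Subgroup A), (⊤ : Subgroup A)⁆) →* Multiplicative R :=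
  centralCoord.comp <|
    (ψ.comp (Subgroup.subtype _)).codRestrict _ fun m => map_mem_ker_proj_of_mem_commutator ψ m.2

@[simp]
theorem commutatorCoord_apply (ψ : A →* Heisenberg R)
    (m : ↥(⁅(⊤ : Subgroup A), (⊤ : Subgroup A)⁆)) :
    commutatorCoord ψ m = Multiplicative.ofAdd (ψ m).c := rfl

theorem commutatorCoord_conjNormal (ψ : A →* Heisenberg R) (g : A)
    (m : ↥(⁅(⊤ : Subgroup A), (⊤ : Subgroup A)⁆)) :
    commutatorCoord ψ (MulAut.conjNormal g m) = commutatorCoord ψ m := by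
  have hm := ker_proj_le_center (map_mem_ker_proj_of_mem_commutator ψ m.2)
  simp only [commutatorCoord_apply, MulAut.conjNormal_apply, map_mul, map_inv,
    Subgroup.mem_center_iff.mp hm (ψ g), mul_inv_cancel_right]

end CommRing

section Field

variable {K : Type*} [Field K] [CharZero K]

theorem pow_bijective {e : ℕ} (he : e ≠ 0) :
    Function.Bijective fun p : Heisenberg K => p ^ e := by
  have he' : (e : K) ≠ 0 := Nat.cast_ne_zero.mpr he
  constructor
  · intro p q hpq
    simp only [pow_eq, Heisenberg.mk.injEq] at hpq
    obtain ⟨ha, hb, hc⟩ := hpq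
    have ha' := mul_left_cancel₀ he' ha
    have hb' := mul_left_cancel₀ he' hb
    rw [ha', hb', add_left_inj] at hc
    ext
    exacts [ha', hb', mul_left_cancel₀ he' hc]
  · intro q
    refine ⟨⟨q.a / e, q.b / e, (q.c - e.choose 2 * (q.a / e) * (q.b / e)) / e⟩, ?_⟩
    simp only [pow_eq]
    ext <;> field_simp
    ring

theorem isRClosed (R : Subring ℚ) : IsRClosed R (Heisenberg K) :=
  isRClosed_of_ker_le_center proj ker_proj_le_center
    (fun _ he => pow_bijective (ne_zero_of_mem_DR he))
    (fun _ he => pow_left_injective (ne_zero_of_mem_DR he))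

end Field

end Heisenberg

theorem Finset.prod_zpow_eq_zpow_sum {ι M : Type*} [CommGroup M] (s : Finset ι) (f : ι → ℤ)
    (a : M) : ∏ i ∈ s, a ^ f i = a ^ ∑ i ∈ s, f i := by
  induction s using Finset.cons_induction <;>
    simp [Finset.prod_cons, Finset.sum_cons, zpow_add, *]

-- `p.degree` is the augmentation of `p` in `ℤ[A ⧸ C]`
theorem lift_pAct {M : Type*} [CommGroup M] (C : Subgroup A) [C.Normal]
    (χ : C →* M) (hχ : ∀ (g : A) (m : C), χ (MulAut.conjNormal g m) = χ m)
    (p : (A ⧸ C) →₀ ℤ) (v : Abelianization C) :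
    Abelianization.lift χ (pAct C p v) = Abelianization.lift χ v ^ p.degree := by
  have hconj (g : A) : (Abelianization.lift χ).comp (conjAbel C g) = Abelianization.lift χ :=
    Abelianization.hom_ext _ _ (MonoidHom.ext fun m => by simp [conjAbel, hχ])
  rw [pAct, map_finsuppProd]
  simp only [map_zpow, ← MonoidHom.comp_apply, hconj]
  exact Finset.prod_zpow_eq_zpow_sum _ _ _

theorem Finsupp.single_sub_single_one_ne_zero {G : Type*} [One G] {a : G} (ha : a ≠ 1) :
    Finsupp.single a (1 : ℤ) - Finsupp.single 1 1 ≠ 0 := by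
  simp [sub_eq_zero, Finsupp.single_eq_single_iff, ha]

/-- Let `F̂` be the `ℚ`-closure of a free group `F` of rank `> 1` with distinct free generators
`x, y`, and let `C = F̂⁽¹⁾ = [F̂,F̂]`, so that `H₁(F̂;ℤ[H₁(F̂;ℚ)]) = C/[C,C]` with the conjugation
action of `ℤ[F̂/C]`.  Then the element `u` represented by `xyx⁻¹y⁻¹` is not of the form `s·v`
with `s = [x] - 1`; consequently the canonical map of `C/[C,C]` into its Ore localization
(equivalently, by divisibility, localization at all nonzero elements of the commutative group
ring) is not surjective. -/
theorem not_divisible_in_closure_of_free {α : Type u} (x y : α) (hxy : x ≠ y)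
    (Ahat : Type u) [Group Ahat] (c : FreeGroup α →* Ahat)
    (hc : IsRClosure (⊤ : Subring ℚ) c) :
    (∀ v : Abelianization ↥(⁅(⊤ : Subgroup Ahat), (⊤ : Subgroup Ahat)⁆),
      pAct ⁅(⊤ : Subgroup Ahat), ⊤⁆
          (Finsupp.single (QuotientGroup.mk (c (FreeGroup.of x))) 1 - Finsupp.single 1 1) v ≠
        Abelianization.of ⟨⁅c (FreeGroup.of x), c (FreeGroup.of y)⁆,
          Subgroup.commutator_mem_commutator (Subgroup.mem_top _) (Subgroup.mem_top _)⟩) ∧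
    ¬ ∀ (m : Abelianization ↥(⁅(⊤ : Subgroup Ahat), (⊤ : Subgroup Ahat)⁆))
        (p : (Ahat ⧸ ⁅(⊤ : Subgroup Ahat), (⊤ : Subgroup Ahat)⁆) →₀ ℤ), p ≠ 0 →
          ∃ v, pAct ⁅(⊤ : Subgroup Ahat), ⊤⁆ p v = m := by
  classical
  have : CharZero (ULift.{u} ℚ) := RingHom.charZero ULift.ringEquiv.toRingHom
  let X : Heisenberg (ULift.{u} ℚ) := ⟨1, 0, 0⟩
  let Y : Heisenberg (ULift.{u} ℚ) := ⟨0, 1, 0⟩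
  obtain ⟨ψ, hψ, -⟩ := hc.2 _ _ (Heisenberg.isRClosed _)
    (FreeGroup.lift fun z => if z = x then X else if z = y then Y else 1)
  have hψx : ψ (c (.of x)) = X := by simpa using DFunLike.congr_fun hψ (.of x)
  have hψy : ψ (c (.of y)) = Y := by simpa [hxy.symm] using DFunLike.congr_fun hψ (.of y)
  set C := ⁅(⊤ : Subgroup Ahat), (⊤ : Subgroup Ahat)⁆
  set s : (Ahat ⧸ C) →₀ ℤ := Finsupp.single (c (FreeGroup.of x) : Ahat ⧸ C) 1 - Finsupp.single 1 1
  set u : Abelianization C := Abelianization.of ⟨⁅c (FreeGroup.of x), c (FreeGroup.of y)⁆,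
    Subgroup.commutator_mem_commutator (Subgroup.mem_top _) (Subgroup.mem_top _)⟩
  have hdiv (v : Abelianization C) : pAct C s v ≠ u := by
    intro h
    have := congrArg (Abelianization.lift (Heisenberg.commutatorCoord ψ)) h.symm
    rw [lift_pAct _ _ (Heisenberg.commutatorCoord_conjNormal ψ)] at this
    simp [s, u, Finsupp.degree_single, hψx, hψy, commutatorElement_def, X, Y] at this
  have hx : (c (FreeGroup.of x) : Ahat ⧸ C) ≠ 1 := by
    rw [Ne, QuotientGroup.eq_one_iff]
    intro hmem
    have := (Heisenberg.mem_ker_proj.mp (Heisenberg.map_mem_ker_proj_of_mem_commutator ψ hmem)).1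
    simp [hψx, X] at this
  refine ⟨hdiv, fun hall => ?_⟩
  obtain ⟨v, hv⟩ := hall u s (Finsupp.single_sub_single_one_ne_zero hx)
  exact hdiv v hv
end
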